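/- arXiv:math/0401070 — 4 statements merged into one kernel-verified Lean document; each statement's English description precedes it below -/
import Mathlib

section
/- For any real numbers t_1, ..., t_J, setting t = t_1 + ... + t_J, one has 1 - cos t ≤ (2J+1) ∑_{j=1}^J (1 - cos t_j). -/
lemma sin_half_sq (x : ℝ) : Real.sin (x / 2) ^ 2 = (1 - Real.cos x) / 2 := by
  have h1 := Real.cos_sq (x / 2)
  have h2 := Real.sin_sq_add_cos_sq (x / 2)
  rw [show 2 * (x / 2) = x by ring] at h1
  linarith

lemma abs_sin_sum_le' {ι : Type*} (s : Finset ι) (f : ι → ℝ) :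
    |Real.sin (∑ j ∈ s, f j)| ≤ ∑ j ∈ s, |Real.sin (f j)| := by
  induction s using Finset.cons_induction with
  | empty => simp
  | cons a s ha ih =>
    rw [Finset.sum_cons, Finset.sum_cons, Real.sin_add]
    calc |Real.sin (f a) * Real.cos (∑ j ∈ s, f j) +
            Real.cos (f a) * Real.sin (∑ j ∈ s, f j)|
        ≤ |Real.sin (f a) * Real.cos (∑ j ∈ s, f j)| +
            |Real.cos (f a) * Real.sin (∑ j ∈ s, f j)| := abs_add_le _ _
      _ ≤ |Real.sin (f a)| + |Real.sin (∑ j ∈ s, f j)| := by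
          rw [abs_mul, abs_mul]
          gcongr
          · calc |Real.sin (f a)| * |Real.cos (∑ j ∈ s, f j)| ≤ |Real.sin (f a)| * 1 := by
                  gcongr; exact Real.abs_cos_le_one _
              _ = |Real.sin (f a)| := mul_one _
          · calc |Real.cos (f a)| * |Real.sin (∑ j ∈ s, f j)| ≤ 1 * |Real.sin (∑ j ∈ s, f j)| := by
                  gcongr; exact Real.abs_cos_le_one _
              _ = |Real.sin (∑ j ∈ s, f j)| := one_mul _
      _ ≤ |Real.sin (f a)| + ∑ j ∈ s, |Real.sin (f j)| := by gcongr

theorem one_sub_cos_sum_le (J : ℕ) (t : Fin J → ℝ) :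
    1 - Real.cos (∑ j, t j) ≤ (2 * (J : ℝ) + 1) * ∑ j, (1 - Real.cos (t j)) := by
  have h1 : 1 - Real.cos (∑ j, t j) = 2 * Real.sin ((∑ j, t j) / 2) ^ 2 := by
    rw [sin_half_sq]; ring
  have h2 : (∑ j, t j) / 2 = ∑ j, t j / 2 := by rw [Finset.sum_div]
  have h3 := abs_sin_sum_le' Finset.univ (fun j => t j / 2)
  have h4 : (∑ j, |Real.sin (t j / 2)|) ^ 2 ≤
      (J : ℝ) * ∑ j, |Real.sin (t j / 2)| ^ 2 := by
    have := sq_sum_le_card_mul_sum_sq (s := (Finset.univ : Finset (Fin J)))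
      (f := fun j => |Real.sin (t j / 2)|)
    simpa using this
  have h5 : Real.sin ((∑ j, t j) / 2) ^ 2 ≤ (J : ℝ) * ∑ j, |Real.sin (t j / 2)| ^ 2 := by
    calc Real.sin ((∑ j, t j) / 2) ^ 2 = |Real.sin ((∑ j, t j) / 2)| ^ 2 := (sq_abs _).symm
      _ ≤ (∑ j, |Real.sin (t j / 2)|) ^ 2 := by
          apply pow_le_pow_left₀ (abs_nonneg _)
          rw [h2]; exact h3
      _ ≤ _ := h4
  have h6 : ∑ j, |Real.sin (t j / 2)| ^ 2 = ∑ j, (1 - Real.cos (t j)) / 2 := by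
    refine Finset.sum_congr rfl fun j _ => ?_
    rw [sq_abs, sin_half_sq]
  have hnn : (0 : ℝ) ≤ ∑ j, (1 - Real.cos (t j)) :=
    Finset.sum_nonneg fun j _ => by nlinarith [Real.cos_le_one (t j)]
  have hJ : (0 : ℝ) ≤ (J : ℝ) := Nat.cast_nonneg _
  have hsum : ∑ j, (1 - Real.cos (t j)) / 2 = (∑ j, (1 - Real.cos (t j))) / 2 := by
    rw [Finset.sum_div]
  rw [h1]
  rw [h6, hsum] at h5
  nlinarith [h5]
end

section
/- For the nearest-neighbor random walk on (Z_r)^n with r ≥ 3 and degree Ω = 2n, the return probability after 2i steps satisfies (1/V) ∑_{k ∈ dual torus} D̂(k)^{2i} ≤ e·2^i·i^{2i} / Ω^i. -/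
/-!
The Fourier transform of the step distribution is `D̂(k) = (1/n) ∑ⱼ cos (2π kⱼ / r)`. Expanding
`(∑ⱼ c (kⱼ))^(2i)` into a sum over index sequences `f : Fin (2i) → Fin n` and summing over `k`,
each term factorises into moments `∑ₐ c a ^ e` of `c a = cos (2π a / r)` on `ZMod r`. The first
moment vanishes and every moment is at most `r` in absolute value, so only sequences in which no
coordinate occurs exactly once contribute, each at most `rⁿ`. Such a sequence takes at most `i`
values, so there are at most `∑_{ℓ ≤ i} C(n, ℓ) ℓ^(2i) ≤ e nⁱ i^(2i)` of them.
-/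

open Finset Real

/-- The dot product `k · x` on the torus `(ℤ_r)^n`, with `k` in the dual torus
identified with the torus itself via `k_j = 2π (k j)/r`. -/
noncomputable def torusDot (r n : ℕ) (k x : Fin n → ZMod r) : ℝ :=
  (2 * Real.pi / r) * ∑ j, ((k j).val : ℝ) * ((x j).val : ℝ)

theorem two_mul_card_image_le_of_card_fiber_ne_one {κ ι : Type*} [Fintype κ] [DecidableEq ι]
    (f : κ → ι) (hf : ∀ j, #{t | f t = j} ≠ 1) : 2 * #(univ.image f) ≤ Fintype.card κ := by
  have hfiber : ∀ j ∈ univ.image f, 2 ≤ #{t | f t = j} := by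
    intro j hj
    obtain ⟨t, -, rfl⟩ := mem_image.mp hj
    have hpos : 0 < #{t' | f t' = f t} := card_pos.mpr ⟨t, by simp⟩
    have hne := hf (f t)
    omega
  calc 2 * #(univ.image f) = ∑ _j ∈ univ.image f, 2 := by rw [sum_const, smul_eq_mul, mul_comm]
    _ ≤ ∑ j ∈ univ.image f, #{t | f t = j} := sum_le_sum hfiber
    _ = Fintype.card κ := by rw [← card_eq_sum_card_image, card_univ]

section Moments

variable {α ι : Type*} [Fintype α] [Fintype ι]

theorem sum_card_pow_filter_two_mul_card_le [Nonempty ι] (i : ℕ) :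
    ∑ s : Finset ι with 2 * #s ≤ 2 * i, (#s : ℝ) ^ (2 * i)
      ≤ exp 1 * (Fintype.card ι : ℝ) ^ i * (i : ℝ) ^ (2 * i) := by
  set n := Fintype.card ι
  have hn : (1 : ℝ) ≤ n := by exact_mod_cast Fintype.card_pos
  have hterm (ℓ : ℕ) : (n.choose ℓ • if 2 * ℓ ≤ 2 * i then (ℓ : ℝ) ^ (2 * i) else 0)
      ≤ (i : ℝ) ^ (2 * i) * (n : ℝ) ^ i * (1 ^ ℓ / ℓ.factorial) := by
    rw [nsmul_eq_mul]
    split_ifs with hℓ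
    · have hℓ : ℓ ≤ i := by omega
      calc (n.choose ℓ : ℝ) * (ℓ : ℝ) ^ (2 * i)
          ≤ (n : ℝ) ^ i / ℓ.factorial * (i : ℝ) ^ (2 * i) := by
            gcongr
            exact (Nat.choose_le_pow_div ℓ n).trans (by gcongr)
        _ = _ := by ring
    · rw [mul_zero]; positivity
  calc ∑ s : Finset ι with 2 * #s ≤ 2 * i, (#s : ℝ) ^ (2 * i)
      = ∑ ℓ ∈ range (n + 1), n.choose ℓ • if 2 * ℓ ≤ 2 * i then (ℓ : ℝ) ^ (2 * i) else 0 := by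
        rw [sum_filter, ← powerset_univ,
          sum_powerset_apply_card fun ℓ => if 2 * ℓ ≤ 2 * i then (ℓ : ℝ) ^ (2 * i) else 0,
          card_univ]
    _ ≤ ∑ ℓ ∈ range (n + 1), (i : ℝ) ^ (2 * i) * (n : ℝ) ^ i * (1 ^ ℓ / ℓ.factorial) :=
        sum_le_sum fun ℓ _ => hterm ℓ
    _ ≤ (i : ℝ) ^ (2 * i) * (n : ℝ) ^ i * exp 1 := by
        rw [← mul_sum]; gcongr; exact sum_le_exp_of_nonneg zero_le_one _
    _ = _ := by ring

variable [DecidableEq ι]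

theorem sum_pow_sum_comp_eq_sum_prod {R : Type*} [CommSemiring R] (c : α → R) (m : ℕ) :
    ∑ k : ι → α, (∑ j, c (k j)) ^ m = ∑ f : Fin m → ι, ∏ j, ∑ a, c a ^ #{t | f t = j} := by
  calc ∑ k : ι → α, (∑ j, c (k j)) ^ m
      = ∑ k : ι → α, ∑ f : Fin m → ι, ∏ j, c (k j) ^ #{t | f t = j} := by
        refine sum_congr rfl fun k _ => ?_
        rw [Fintype.sum_pow]
        refine sum_congr rfl fun f _ => ?_
        rw [← prod_fiberwise' univ f (fun j => c (k j))]
        simp only [prod_const]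
    _ = _ := by
        rw [sum_comm]
        simp only [Fintype.prod_sum]

theorem sum_pow_sum_comp_le_card_mul (c : α → ℝ) (hsum : ∑ a, c a = 0) (hc : ∀ a, |c a| ≤ 1)
    (m : ℕ) : ∑ k : ι → α, (∑ j, c (k j)) ^ m
      ≤ #{f : Fin m → ι | ∀ j, #{t | f t = j} ≠ 1} * (Fintype.card α : ℝ) ^ Fintype.card ι := by
  have hmoment (e : ℕ) : |∑ a, c a ^ e| ≤ Fintype.card α := by
    calc |∑ a, c a ^ e| ≤ ∑ a, |c a| ^ e := by
          simpa only [abs_pow] using abs_sum_le_sum_abs (fun a => c a ^ e) univ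
      _ ≤ ∑ _a : α, 1 := sum_le_sum fun a _ => pow_le_one₀ (abs_nonneg _) (hc a)
      _ = Fintype.card α := by simp
  rw [sum_pow_sum_comp_eq_sum_prod, natCast_card_filter, sum_mul]
  refine sum_le_sum fun f _ => ?_
  split_ifs with hf
  · calc ∏ j, ∑ a, c a ^ #{t | f t = j} ≤ ∏ j, |∑ a, c a ^ #{t | f t = j}| := by
          rw [← abs_prod]; exact le_abs_self _
      _ ≤ ∏ _j : ι, (Fintype.card α : ℝ) :=
          prod_le_prod (fun _ _ => abs_nonneg _) fun j _ => hmoment _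
      _ = 1 * (Fintype.card α : ℝ) ^ Fintype.card ι := by simp
  · obtain ⟨j, hj⟩ := not_forall_not.mp hf
    rw [zero_mul, prod_eq_zero (mem_univ j) (by simp only [hj, pow_one, hsum])]

theorem card_filter_forall_card_fiber_ne_one_le (m : ℕ) :
    #{f : Fin m → ι | ∀ j, #{t | f t = j} ≠ 1} ≤ ∑ s : Finset ι with 2 * #s ≤ m, #s ^ m := by
  calc #{f : Fin m → ι | ∀ j, #{t | f t = j} ≠ 1}
      ≤ #(({s | 2 * #s ≤ m} : Finset (Finset ι)).biUnion
          fun s => Fintype.piFinset fun _ : Fin m => s) := by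
        refine card_le_card fun f hf => mem_biUnion.mpr ⟨univ.image f, ?_, ?_⟩
        · simpa using two_mul_card_image_le_of_card_fiber_ne_one f (mem_filter.mp hf).2
        · exact Fintype.mem_piFinset.mpr fun t => mem_image_of_mem f (mem_univ t)
    _ ≤ ∑ s : Finset ι with 2 * #s ≤ m, #(Fintype.piFinset fun _ : Fin m => s) := card_biUnion_le
    _ = ∑ s : Finset ι with 2 * #s ≤ m, #s ^ m := by
        simp only [Fintype.card_piFinset, prod_const, card_univ, Fintype.card_fin]

theorem sum_pow_two_mul_sum_comp_le [Nonempty ι] (c : α → ℝ) (hsum : ∑ a, c a = 0)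
    (hc : ∀ a, |c a| ≤ 1) (i : ℕ) :
    ∑ k : ι → α, (∑ j, c (k j)) ^ (2 * i)
      ≤ exp 1 * (Fintype.card ι : ℝ) ^ i * (i : ℝ) ^ (2 * i) *
          (Fintype.card α : ℝ) ^ Fintype.card ι := by
  calc ∑ k : ι → α, (∑ j, c (k j)) ^ (2 * i)
      ≤ #{f : Fin (2 * i) → ι | ∀ j, #{t | f t = j} ≠ 1} * (Fintype.card α : ℝ) ^ Fintype.card ι :=
        sum_pow_sum_comp_le_card_mul c hsum hc _
    _ ≤ (∑ s : Finset ι with 2 * #s ≤ 2 * i, (#s : ℝ) ^ (2 * i)) *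
          (Fintype.card α : ℝ) ^ Fintype.card ι := by
        gcongr
        exact_mod_cast card_filter_forall_card_fiber_ne_one_le (2 * i)
    _ ≤ _ := by
        gcongr
        exact sum_card_pow_filter_two_mul_card_le i

end Moments

theorem ZMod.sum_cos_two_pi_div_mul_val_eq_zero (r : ℕ) [Fact (1 < r)] :
    ∑ a : ZMod r, cos (2 * π / r * a.val) = 0 := by
  have hre (a : ZMod r) : cos (2 * π / r * a.val) = (ZMod.stdAddChar a).re := by
    rw [ZMod.stdAddChar_apply, ZMod.toCircle_apply, ← Complex.exp_ofReal_mul_I_re]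
    push_cast
    ring_nf
  have hne : (ZMod.stdAddChar : AddChar (ZMod r) ℂ) ≠ 1 := fun h => one_ne_zero <|
    ZMod.injective_stdAddChar (by rw [h, AddChar.one_apply, AddChar.map_zero_eq_one])
  simp only [hre, ← Complex.re_sum, AddChar.sum_eq_zero_of_ne_one hne, Complex.zero_re]

theorem torusDot_eq_mul_natCast (r n : ℕ) (k x : Fin n → ZMod r) :
    torusDot r n k x = 2 * π / r * ((∑ j, (k j).val * (x j).val : ℕ) : ℝ) := by
  simp only [torusDot, Nat.cast_sum, Nat.cast_mul]

theorem cos_torusDot_neg (r n : ℕ) [NeZero r] (k x : Fin n → ZMod r) :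
    cos (torusDot r n k (-x)) = cos (torusDot r n k x) := by
  -- the two dot products add up to `2π` times an integer, since `(-a).val + a.val ≡ 0 mod r`
  set a := ∑ j, (k j).val * (-x j).val
  set b := ∑ j, (k j).val * (x j).val
  obtain ⟨q, hq⟩ : r ∣ a + b := by
    rw [← ZMod.natCast_eq_zero_iff]
    simp only [a, b, Nat.cast_add, Nat.cast_sum, Nat.cast_mul, ZMod.natCast_val, ZMod.cast_id',
      id, ← sum_add_distrib, ← mul_add, neg_add_cancel, mul_zero, sum_const_zero]
  have hr : (r : ℝ) ≠ 0 := Nat.cast_ne_zero.mpr (NeZero.ne r)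
  have ha : (a : ℝ) = r * q - b := by
    rw [eq_sub_iff_add_eq]; exact_mod_cast hq
  rw [torusDot_eq_mul_natCast, torusDot_eq_mul_natCast]
  simp only [Pi.neg_apply]
  rw [ha, ← Real.cos_nat_mul_two_pi_sub (2 * π / r * b) q]
  congr 1
  field_simp

theorem torusDot_single (r n : ℕ) (k : Fin n → ZMod r) (j : Fin n) (a : ZMod r) :
    torusDot r n k (Pi.single j a) = 2 * π / r * ((k j).val * a.val) := by
  rw [torusDot, Fintype.sum_eq_single j fun l hl => by simp [hl]]
  simp

def nnStep (r n : ℕ) (p : Fin n × Bool) : Fin n → ZMod r :=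
  Pi.single p.1 (if p.2 then 1 else -1)

theorem exists_nnStep_eq_iff {r n : ℕ} (x : Fin n → ZMod r) :
    (∃ p, nnStep r n p = x) ↔ ∃ j, (x j = 1 ∨ x j = -1) ∧ ∀ l, l ≠ j → x l = 0 := by
  constructor
  · rintro ⟨⟨j, b⟩, rfl⟩
    refine ⟨j, ?_, fun l hl => Pi.single_eq_of_ne hl _⟩
    cases b <;> simp [nnStep]
  · rintro ⟨j, hj, hzero⟩
    have hx : x = Pi.single j (x j) := by
      ext l
      by_cases hl : l = j
      · subst hl; simp
      · simp [hl, hzero l hl]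
    rcases hj with h | h
    · exact ⟨(j, true), by rw [hx, h]; rfl⟩
    · exact ⟨(j, false), by rw [hx, h]; rfl⟩

theorem nnStep_injective (r n : ℕ) [Fact (2 < r)] : Function.Injective (nnStep r n) := by
  have hsign (b : Bool) : (if b then 1 else -1 : ZMod r) ≠ 0 := by
    have : Fact (1 < r) := ⟨by have := Fact.out (p := 2 < r); omega⟩
    cases b <;> simp
  rintro ⟨j, b⟩ ⟨j', b'⟩ h
  obtain rfl : j = j' := by
    by_contra hj
    exact hsign b (by simpa [nnStep, Pi.single_apply, hj] using congrFun h j)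
  have := Pi.single_injective j h
  cases b <;> cases b' <;> simp_all [ZMod.neg_one_ne_one, ZMod.neg_one_ne_one.symm]

theorem cos_torusDot_nnStep (r n : ℕ) [Fact (1 < r)] (k : Fin n → ZMod r) (p : Fin n × Bool) :
    cos (torusDot r n k (nnStep r n p)) = cos (2 * π / r * (k p.1).val) := by
  obtain ⟨j, b⟩ := p
  have hstep : nnStep r n (j, b) = if b then Pi.single j 1 else -Pi.single j 1 := by
    cases b <;> simp [nnStep, Pi.single_neg]
  cases b <;> simp [hstep, cos_torusDot_neg, torusDot_single, ZMod.val_one]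

open scoped Classical in
theorem sum_mul_cos_torusDot_eq (r n : ℕ) [NeZero r] [Fact (2 < r)] (D : (Fin n → ZMod r) → ℝ)
    (hD : ∀ x : Fin n → ZMod r,
      D x = if (∃ j, (x j = 1 ∨ x j = -1) ∧ ∀ l, l ≠ j → x l = 0)
        then 1 / (2 * (n : ℝ)) else 0) (k : Fin n → ZMod r) :
    ∑ x, D x * cos (torusDot r n k x) = 1 / n * ∑ j, cos (2 * π / r * (k j).val) := by
  have : Fact (1 < r) := ⟨by have := Fact.out (p := 2 < r); omega⟩
  have hsupp : ({x | ∃ j, (x j = 1 ∨ x j = -1) ∧ ∀ l, l ≠ j → x l = 0} :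
      Finset (Fin n → ZMod r)) = univ.image (nnStep r n) := by
    ext x
    rw [mem_filter, mem_image, ← exists_nnStep_eq_iff]
    simp
  calc ∑ x, D x * cos (torusDot r n k x)
      = ∑ x with ∃ j, (x j = 1 ∨ x j = -1) ∧ ∀ l, l ≠ j → x l = 0,
          1 / (2 * n) * cos (torusDot r n k x) := by
        simp only [sum_filter, hD, ite_mul, zero_mul]
    _ = ∑ p, 1 / (2 * n) * cos (torusDot r n k (nnStep r n p)) := by
        rw [hsupp, sum_image fun p _ q _ h => nnStep_injective r n h]
    _ = 1 / n * ∑ j, cos (2 * π / r * (k j).val) := by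
        rw [Fintype.sum_prod_type, mul_sum]
        refine sum_congr rfl fun j _ => ?_
        simp only [Fintype.sum_bool, cos_torusDot_nnStep]
        ring

open scoped Classical in
theorem nn_return_probability_bound (r n : ℕ) [NeZero r] (hr : 3 ≤ r) (hn : 1 ≤ n)
    (i : ℕ)
    (D : (Fin n → ZMod r) → ℝ)
    (hD : ∀ x : Fin n → ZMod r,
      D x = if (∃ j, (x j = 1 ∨ x j = -1) ∧ ∀ l, l ≠ j → x l = 0)
        then 1 / (2 * (n : ℝ)) else 0) :
    (1 / (r : ℝ) ^ n) * ∑ k : Fin n → ZMod r,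
        (∑ x, D x * Real.cos (torusDot r n k x)) ^ (2 * i)
      ≤ Real.exp 1 * 2 ^ i * (i : ℝ) ^ (2 * i) / (2 * (n : ℝ)) ^ i := by
  have : Fact (2 < r) := ⟨hr⟩
  have : Fact (1 < r) := ⟨by omega⟩
  have : Nonempty (Fin n) := ⟨⟨0, hn⟩⟩
  have hmoment := sum_pow_two_mul_sum_comp_le (ι := Fin n)
    (fun a : ZMod r => cos (2 * π / r * a.val)) (ZMod.sum_cos_two_pi_div_mul_val_eq_zero r)
    (fun a => abs_cos_le_one _) i
  simp only [ZMod.card, Fintype.card_fin] at hmoment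
  simp only [sum_mul_cos_torusDot_eq r n D hD, mul_pow, ← mul_sum]
  calc 1 / (r : ℝ) ^ n * ((1 / n) ^ (2 * i) *
        ∑ k : Fin n → ZMod r, (∑ j, cos (2 * π / r * (k j).val)) ^ (2 * i))
      ≤ 1 / (r : ℝ) ^ n * ((1 / n) ^ (2 * i) * (exp 1 * n ^ i * i ^ (2 * i) * r ^ n)) := by
        gcongr
    _ = exp 1 * 2 ^ i * i ^ (2 * i) / (2 ^ i * n ^ i) := by
        rw [one_div_pow, pow_mul]
        field_simp
        ring
end

section
/- Let g be a symmetric function on a finite abelian group and define the forward difference ∂_k^+ ĝ(l) = ĝ(l+k) - ĝ(l). Then |∂_k^± ĝ(l)| ≤ ∑_x [1-cos(k·x)]|g(x)| + (4·∑_x[1-cos(k·x)]|g(x)|·∑_y[1-cos(l·y)]|g(y)|)^{1/2}. -/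
/-- Fourier transform (cosine series) of a symmetric function on the torus. -/
noncomputable def ghat (r n : ℕ) [NeZero r] (g : (Fin n → ZMod r) → ℝ)
    (l : Fin n → ZMod r) : ℝ :=
  ∑ x, g x * Real.cos (torusDot r n l x)

lemma torusDot_shift (r n : ℕ) [NeZero r] (a b x : Fin n → ZMod r) :
    ∃ m : ℤ, torusDot r n (a + b) x
      = torusDot r n a x + torusDot r n b x + m * (2 * Real.pi) := by
  set c : Fin n → ℕ := fun j => ((a j).val + (b j).val) / r with hcdef
  refine ⟨-(∑ j, (c j : ℤ) * ((x j).val : ℤ)), ?_⟩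
  have hr : (r : ℝ) ≠ 0 := Nat.cast_ne_zero.2 (NeZero.ne r)
  have key : ∀ j, (((a + b) j).val : ℝ)
      = (a j).val + (b j).val - r * (c j : ℝ) := by
    intro j
    have h1 : (a j + b j).val = ((a j).val + (b j).val) % r := ZMod.val_add _ _
    have h2 := Nat.mod_add_div ((a j).val + (b j).val) r
    have h3 : (a j + b j).val + r * c j = (a j).val + (b j).val := by
      rw [h1, hcdef]; exact h2
    have h4 : ((a j + b j).val : ℝ) + r * (c j : ℝ)
        = ((a j).val : ℝ) + ((b j).val : ℝ) := by exact_mod_cast congrArg (Nat.cast : ℕ → ℝ) h3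
    simp only [Pi.add_apply]
    linarith
  have hsum : ∑ j, (((a + b) j).val : ℝ) * ((x j).val : ℝ)
      = (∑ j, ((a j).val : ℝ) * (x j).val) + (∑ j, ((b j).val : ℝ) * (x j).val)
        - r * ∑ j, (c j : ℝ) * ((x j).val : ℝ) := by
    rw [← Finset.sum_add_distrib, Finset.mul_sum, ← Finset.sum_sub_distrib]
    refine Finset.sum_congr rfl fun j _ => ?_
    rw [key j]; ring
  have hcast : ((-(∑ j, (c j : ℤ) * ((x j).val : ℤ)) : ℤ) : ℝ)
      = -∑ j, (c j : ℝ) * ((x j).val : ℝ) := by push_cast; ring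
  unfold torusDot
  rw [hsum, hcast]
  field_simp
  ring

lemma cos_torusDot_add (r n : ℕ) [NeZero r] (a b x : Fin n → ZMod r) :
    Real.cos (torusDot r n (a + b) x)
      = Real.cos (torusDot r n a x + torusDot r n b x) := by
  obtain ⟨m, hm⟩ := torusDot_shift r n a b x
  rw [hm, Real.cos_add_int_mul_two_pi]

lemma cos_torusDot_sub (r n : ℕ) [NeZero r] (l k x : Fin n → ZMod r) :
    Real.cos (torusDot r n (l - k) x)
      = Real.cos (torusDot r n l x - torusDot r n k x) := by
  obtain ⟨m, hm⟩ := torusDot_shift r n (l - k) k x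
  rw [sub_add_cancel] at hm
  have : torusDot r n (l - k) x
      = (torusDot r n l x - torusDot r n k x) + ((-m : ℤ) : ℝ) * (2 * Real.pi) := by
    push_cast; linarith
  rw [this, Real.cos_add_int_mul_two_pi]

lemma sin_sq_le (t : ℝ) : Real.sin t ^ 2 ≤ 2 * (1 - Real.cos t) := by
  nlinarith [Real.sin_sq_add_cos_sq t, Real.cos_le_one t, Real.neg_one_le_cos t]

lemma abs_sum_bound {ι : Type*} [Fintype ι] (g L K : ι → ℝ) (ε : ℝ) (hε : |ε| = 1) :
    |∑ i, g i * (ε * Real.cos (L i) * (1 - Real.cos (K i))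
        - Real.sin (L i) * Real.sin (K i))|
      ≤ (∑ i, (1 - Real.cos (K i)) * |g i|)
        + Real.sqrt (4 * (∑ i, (1 - Real.cos (K i)) * |g i|)
            * (∑ i, (1 - Real.cos (L i)) * |g i|)) := by
  set A := ∑ i, (1 - Real.cos (K i)) * |g i| with hA
  set B := ∑ i, (1 - Real.cos (L i)) * |g i| with hB
  have hnn : ∀ t : ℝ, 0 ≤ 1 - Real.cos t := fun t => by
    nlinarith [Real.cos_le_one t]
  have hA0 : 0 ≤ A := Finset.sum_nonneg fun i _ =>
    mul_nonneg (hnn _) (abs_nonneg _)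
  have hB0 : 0 ≤ B := Finset.sum_nonneg fun i _ =>
    mul_nonneg (hnn _) (abs_nonneg _)
  have split : ∑ i, g i * (ε * Real.cos (L i) * (1 - Real.cos (K i))
        - Real.sin (L i) * Real.sin (K i))
      = (∑ i, g i * (ε * Real.cos (L i) * (1 - Real.cos (K i))))
        - ∑ i, g i * (Real.sin (L i) * Real.sin (K i)) := by
    rw [← Finset.sum_sub_distrib]
    exact Finset.sum_congr rfl fun i _ => by ring
  have h1 : |∑ i, g i * (ε * Real.cos (L i) * (1 - Real.cos (K i)))| ≤ A := by
    refine (Finset.abs_sum_le_sum_abs _ _).trans ?_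
    refine Finset.sum_le_sum fun i _ => ?_
    rw [abs_mul, abs_mul, abs_mul, hε, abs_of_nonneg (hnn (K i))]
    have hc := Real.abs_cos_le_one (L i)
    have h0 : 0 ≤ (1 - |Real.cos (L i)|) * ((1 - Real.cos (K i)) * |g i|) :=
      mul_nonneg (by linarith) (mul_nonneg (hnn _) (abs_nonneg _))
    nlinarith [h0]
  have h2 : |∑ i, g i * (Real.sin (L i) * Real.sin (K i))| ≤ Real.sqrt (4 * A * B) := by
    have step1 : |∑ i, g i * (Real.sin (L i) * Real.sin (K i))|
        ≤ ∑ i, (Real.sqrt |g i| * |Real.sin (K i)|) * (Real.sqrt |g i| * |Real.sin (L i)|) := by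
      refine (Finset.abs_sum_le_sum_abs _ _).trans ?_
      refine Finset.sum_le_sum fun i _ => ?_
      rw [abs_mul, abs_mul]
      have : Real.sqrt |g i| * Real.sqrt |g i| = |g i| :=
        Real.mul_self_sqrt (abs_nonneg _)
      calc |g i| * (|Real.sin (L i)| * |Real.sin (K i)|)
          = (Real.sqrt |g i| * |Real.sin (K i)|) * (Real.sqrt |g i| * |Real.sin (L i)|) := by
            linear_combination (-(|Real.sin (L i)| * |Real.sin (K i)|)) * this
        _ ≤ _ := le_refl _
    have cs := Finset.sum_mul_sq_le_sq_mul_sq Finset.univ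
      (fun i => Real.sqrt |g i| * |Real.sin (K i)|)
      (fun i => Real.sqrt |g i| * |Real.sin (L i)|)
    have sqK : ∑ i, (Real.sqrt |g i| * |Real.sin (K i)|) ^ 2 ≤ 2 * A := by
      rw [hA, Finset.mul_sum]
      refine Finset.sum_le_sum fun i _ => ?_
      have h := Real.sq_sqrt (abs_nonneg (g i))
      have h2 := sin_sq_le (K i)
      have : (Real.sqrt |g i| * |Real.sin (K i)|) ^ 2 = |g i| * Real.sin (K i) ^ 2 := by
        rw [mul_pow, h, sq_abs]
      rw [this]
      nlinarith [abs_nonneg (g i)]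
    have sqL : ∑ i, (Real.sqrt |g i| * |Real.sin (L i)|) ^ 2 ≤ 2 * B := by
      rw [hB, Finset.mul_sum]
      refine Finset.sum_le_sum fun i _ => ?_
      have h := Real.sq_sqrt (abs_nonneg (g i))
      have h2 := sin_sq_le (L i)
      have : (Real.sqrt |g i| * |Real.sin (L i)|) ^ 2 = |g i| * Real.sin (L i) ^ 2 := by
        rw [mul_pow, h, sq_abs]
      rw [this]
      nlinarith [abs_nonneg (g i)]
    have S0 : 0 ≤ ∑ i, (Real.sqrt |g i| * |Real.sin (K i)|) * (Real.sqrt |g i| * |Real.sin (L i)|) :=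
      Finset.sum_nonneg fun i _ => mul_nonneg
        (mul_nonneg (Real.sqrt_nonneg _) (abs_nonneg _))
        (mul_nonneg (Real.sqrt_nonneg _) (abs_nonneg _))
    have sqK0 : 0 ≤ ∑ i, (Real.sqrt |g i| * |Real.sin (K i)|) ^ 2 :=
      Finset.sum_nonneg fun i _ => sq_nonneg _
    have final : (∑ i, (Real.sqrt |g i| * |Real.sin (K i)|) * (Real.sqrt |g i| * |Real.sin (L i)|)) ^ 2
        ≤ 4 * A * B := by nlinarith
    refine step1.trans ?_
    exact (Real.le_sqrt S0 (by nlinarith)).mpr final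
  calc |_| = _ := congrArg abs split
    _ ≤ |∑ i, g i * (ε * Real.cos (L i) * (1 - Real.cos (K i)))|
        + |∑ i, g i * (Real.sin (L i) * Real.sin (K i))| := abs_sub _ _
    _ ≤ A + Real.sqrt (4 * A * B) := add_le_add h1 h2

theorem ghat_discrete_derivative_bound (r n : ℕ) [NeZero r]
    (g : (Fin n → ZMod r) → ℝ) (hsym : ∀ x, g (-x) = g x)
    (l k : Fin n → ZMod r) :
    |ghat r n g (l + k) - ghat r n g l|
        ≤ (∑ x, (1 - Real.cos (torusDot r n k x)) * |g x|)
          + Real.sqrt (4 * (∑ x, (1 - Real.cos (torusDot r n k x)) * |g x|)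
              * (∑ y, (1 - Real.cos (torusDot r n l y)) * |g y|))
    ∧ |ghat r n g l - ghat r n g (l - k)|
        ≤ (∑ x, (1 - Real.cos (torusDot r n k x)) * |g x|)
          + Real.sqrt (4 * (∑ x, (1 - Real.cos (torusDot r n k x)) * |g x|)
              * (∑ y, (1 - Real.cos (torusDot r n l y)) * |g y|)) := by
  constructor
  · have expand : ghat r n g (l + k) - ghat r n g l
        = ∑ x, g x * ((-1) * Real.cos (torusDot r n l x) * (1 - Real.cos (torusDot r n k x))
            - Real.sin (torusDot r n l x) * Real.sin (torusDot r n k x)) := by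
      unfold ghat
      rw [← Finset.sum_sub_distrib]
      refine Finset.sum_congr rfl fun x _ => ?_
      rw [cos_torusDot_add r n l k x, Real.cos_add]
      ring
    rw [expand]
    exact abs_sum_bound g _ _ (-1) (by norm_num)
  · have expand : ghat r n g l - ghat r n g (l - k)
        = ∑ x, g x * (1 * Real.cos (torusDot r n l x) * (1 - Real.cos (torusDot r n k x))
            - Real.sin (torusDot r n l x) * Real.sin (torusDot r n k x)) := by
      unfold ghat
      rw [← Finset.sum_sub_distrib]
      refine Finset.sum_congr rfl fun x _ => ?_
      rw [cos_torusDot_sub r n l k x, Real.cos_sub]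
      ring
    rw [expand]
    exact abs_sum_bound g _ _ 1 (by norm_num)
end

section
/- For percolation on a finite graph: for any vertices x ≠ y, if x is connected to y by a path of occupied bonds, then there exists a neighbor v of x such that the bond {x,v} is occupied and v is connected to y disjointly from this bond; consequently by the BK inequality, τ_p(x,y) ≤ p ∑_{v: {x,v} ∈ B} τ_p(v,y) for x ≠ y, i.e. τ_p(x) ≤ pΩ(D*τ_p)(x) for x ≠ 0 on a transitive graph. -/
/-- `x` and `y` are connected by a path of occupied bonds in configuration `ω`. -/
def Occ {V : Type*} (G : SimpleGraph V) (ω : Sym2 V → Bool) : V → V → Prop :=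
  Relation.ReflTransGen (fun a b => G.Adj a b ∧ ω s(a, b) = true)

/-- The weight of a percolation configuration `ω` at bond parameter `p`. -/
noncomputable def percWeight {V : Type*} [Fintype V] [DecidableEq V]
    (G : SimpleGraph V) [DecidableRel G.Adj] (p : ℝ) (ω : Sym2 V → Bool) : ℝ :=
  ∏ e ∈ G.edgeFinset, (if ω e then p else 1 - p)

open Classical in
/-- The percolation two-point function `τ_p(x,y) = P_p(x ↔ y)`. -/
noncomputable def tau {V : Type*} [Fintype V] [DecidableEq V]
    (G : SimpleGraph V) [DecidableRel G.Adj] (p : ℝ) (x y : V) : ℝ :=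
  ∑ ω : Sym2 V → Bool, if Occ G ω x y then percWeight G p ω else 0

/-!
Follow an occupied self-avoiding path from `x` to `y`: its first bond `{x, v}` is occupied and the
rest of the path never uses it, so `v ↔ y` even after closing `{x, v}`. Summing over `v`, the event
"`{x, v}` occupied and `v ↔ y` off `{x, v}`" factorises, since the second half does not look at
the bond `{x, v}`; its probability is `p` times that of "`v ↔ y` off `{x, v}`", which is at most
`τ_p(v, y)`.
-/

open Function

namespace Occ

variable {V : Type*} (G : SimpleGraph V) (ω : Sym2 V → Bool)

def graph : SimpleGraph V where
  Adj a b := G.Adj a b ∧ ω s(a, b) = true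
  symm := ⟨fun _ _ h => ⟨h.1.symm, by rw [Sym2.eq_swap]; exact h.2⟩⟩
  loopless := ⟨fun a h => G.loopless.irrefl a h.1⟩

variable {G ω}

theorem iff_reachable {a b : V} : Occ G ω a b ↔ (graph G ω).Reachable a b := by
  rw [SimpleGraph.reachable_iff_reflTransGen]
  rfl

theorem of_walk_of_notMem_edges [DecidableEq V] {e : Sym2 V} {a b : V}
    (w : (graph G ω).Walk a b) (he : e ∉ w.edges) : Occ G (update ω e false) a b := by
  induction w with
  | nil => exact .refl
  | cons h _ ih =>
    rw [SimpleGraph.Walk.edges_cons, List.mem_cons, not_or] at he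
    exact .head ⟨h.1, by rw [update_of_ne (Ne.symm he.1)]; exact h.2⟩ (ih he.2)

theorem exists_first_step [DecidableEq V] {x y : V} (hxy : x ≠ y) (h : Occ G ω x y) :
    ∃ v, G.Adj x v ∧ ω s(x, v) = true ∧ Occ G (update ω s(x, v) false) v y := by
  obtain ⟨w⟩ := iff_reachable.1 h
  obtain ⟨q, hq⟩ := w.toPath
  cases q with
  | nil => exact absurd rfl hxy
  | cons hxv t =>
    rw [SimpleGraph.Walk.cons_isPath_iff] at hq
    exact ⟨_, hxv.1, hxv.2, of_walk_of_notMem_edges t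
      fun hmem => hq.2 (SimpleGraph.Walk.fst_mem_support_of_mem_edges t hmem)⟩

theorem of_update_false [DecidableEq V] {e : Sym2 V} {a b : V}
    (h : Occ G (update ω e false) a b) : Occ G ω a b := by
  refine Relation.ReflTransGen.mono (fun u v (huv : G.Adj u v ∧ _) => ⟨huv.1, ?_⟩) _ _ h
  by_cases hue : s(u, v) = e
  · simp [hue] at huv
  · simpa [update_of_ne hue] using huv.2

end Occ

section Weights

variable {V : Type*} [Fintype V] [DecidableEq V] (G : SimpleGraph V) [DecidableRel G.Adj]

theorem percWeight_nonneg {p : ℝ} (hp0 : 0 ≤ p) (hp1 : p ≤ 1) (ω : Sym2 V → Bool) :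
    0 ≤ percWeight G p ω :=
  Finset.prod_nonneg fun _ _ => by split <;> linarith

variable (p : ℝ)

noncomputable def percWeightOff (e : Sym2 V) (ω : Sym2 V → Bool) : ℝ :=
  ∏ e' ∈ G.edgeFinset.erase e, (if ω e' then p else 1 - p)

theorem percWeight_eq_mul_percWeightOff {e : Sym2 V} (he : e ∈ G.edgeFinset)
    (ω : Sym2 V → Bool) :
    percWeight G p ω = (if ω e then p else 1 - p) * percWeightOff G p e ω :=
  (Finset.mul_prod_erase _ _ he).symm

theorem percWeightOff_update (e : Sym2 V) (ω : Sym2 V → Bool) (c : Bool) :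
    percWeightOff G p e (update ω e c) = percWeightOff G p e ω :=
  Finset.prod_congr rfl fun _ he' => by rw [update_of_ne (Finset.ne_of_mem_erase he')]

open Classical in
noncomputable def percProb (E : (Sym2 V → Bool) → Prop) : ℝ :=
  ∑ ω : Sym2 V → Bool, if E ω then percWeight G p ω else 0

variable {G p}

theorem percProb_mono (hp0 : 0 ≤ p) (hp1 : p ≤ 1) {E F : (Sym2 V → Bool) → Prop}
    (hEF : ∀ ω, E ω → F ω) : percProb G p E ≤ percProb G p F := by
  classical
  refine Finset.sum_le_sum fun ω _ => ?_
  by_cases hE : E ω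
  · simp [hE, hEF ω hE]
  · simp only [hE, if_false]
    split_ifs <;> simp [percWeight_nonneg G hp0 hp1 ω]

theorem percProb_le_sum {ι : Type*} (hp0 : 0 ≤ p) (hp1 : p ≤ 1) (s : Finset ι)
    {E : (Sym2 V → Bool) → Prop} {F : ι → (Sym2 V → Bool) → Prop}
    (hEF : ∀ ω, E ω → ∃ i ∈ s, F i ω) : percProb G p E ≤ ∑ i ∈ s, percProb G p (F i) := by
  classical
  have hw := percWeight_nonneg G hp0 hp1
  simp only [percProb]
  rw [Finset.sum_comm]
  refine Finset.sum_le_sum fun ω _ => ?_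
  by_cases hE : E ω
  · obtain ⟨i, hi, hF⟩ := hEF ω hE
    calc (if E ω then percWeight G p ω else 0)
        = if F i ω then percWeight G p ω else 0 := by simp [hE, hF]
      _ ≤ ∑ j ∈ s, if F j ω then percWeight G p ω else 0 :=
        Finset.single_le_sum (f := fun j => if F j ω then percWeight G p ω else 0)
          (fun j _ => by split_ifs <;> simp [hw ω]) hi
  · simp only [hE, if_false]
    exact Finset.sum_nonneg fun j _ => by split_ifs <;> simp [hw ω]

open Classical in
/-- Toggling the bond `e` is a bijection between the configurations in `B` with `e` open and
those with `e` closed, and it preserves the weight off `e`. -/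
theorem sum_percWeightOff_open_eq_closed (e : Sym2 V) {B : (Sym2 V → Bool) → Prop}
    (hB : ∀ ω c, B (update ω e c) ↔ B ω) :
    (∑ ω : Sym2 V → Bool, if ω e = true ∧ B ω then percWeightOff G p e ω else 0)
      = ∑ ω : Sym2 V → Bool, if ω e = false ∧ B ω then percWeightOff G p e ω else 0 := by
  let toggle : (Sym2 V → Bool) → (Sym2 V → Bool) := fun ω => update ω e (!ω e)
  have htoggle : Involutive toggle := fun ω => by
    ext s
    by_cases hs : s = e
    · subst hs; simp [toggle]
    · simp [toggle, update_of_ne hs]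
  refine Fintype.sum_bijective toggle htoggle.bijective _ _ fun ω => ?_
  have he : toggle ω e = !ω e := update_self _ _ _
  have hBt : B (toggle ω) ↔ B ω := hB ω _
  have hwt : percWeightOff G p e (toggle ω) = percWeightOff G p e ω :=
    percWeightOff_update G p e ω _
  simp only [he, hBt, hwt]
  cases ω e <;> simp

open Classical in
theorem percProb_open_and {e : Sym2 V} (he : e ∈ G.edgeFinset)
    {B : (Sym2 V → Bool) → Prop} (hB : ∀ ω c, B (update ω e c) ↔ B ω) :
    percProb G p (fun ω => ω e = true ∧ B ω) = p * percProb G p B := by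
  have hsplit := sum_percWeightOff_open_eq_closed (G := G) (p := p) e hB
  set S := ∑ ω : Sym2 V → Bool, if ω e = true ∧ B ω then percWeightOff G p e ω else 0
  have hopen : percProb G p (fun ω => ω e = true ∧ B ω) = p * S := by
    rw [percProb, Finset.mul_sum]
    refine Finset.sum_congr rfl fun ω _ => ?_
    rw [percWeight_eq_mul_percWeightOff G p he]
    by_cases h : ω e = true ∧ B ω <;> simp [h]
  have hall : percProb G p B = p * S + (1 - p) * S := by
    nth_rw 2 [hsplit]
    rw [percProb, Finset.mul_sum, Finset.mul_sum, ← Finset.sum_add_distrib]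
    refine Finset.sum_congr rfl fun ω _ => ?_
    rw [percWeight_eq_mul_percWeightOff G p he]
    by_cases hb : B ω <;> cases ω e <;> simp [hb]
  rw [hopen, hall]
  ring

end Weights

theorem two_point_first_step_bound {V : Type*} [Fintype V] [DecidableEq V]
    (G : SimpleGraph V) [DecidableRel G.Adj]
    (p : ℝ) (hp0 : 0 ≤ p) (hp1 : p ≤ 1) (x y : V) (hxy : x ≠ y) :
    (∀ ω : Sym2 V → Bool, Occ G ω x y →
      ∃ v, G.Adj x v ∧ ω s(x, v) = true ∧
        Occ G (Function.update ω s(x, v) false) v y)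
    ∧ tau G p x y ≤ p * ∑ v ∈ G.neighborFinset x, tau G p v y := by
  refine ⟨fun ω => Occ.exists_first_step hxy, ?_⟩
  calc tau G p x y
      ≤ ∑ v ∈ G.neighborFinset x,
          percProb G p (fun ω => ω s(x, v) = true ∧ Occ G (update ω s(x, v) false) v y) :=
        percProb_le_sum hp0 hp1 _ fun ω h => by
          obtain ⟨v, hadj, hopen, hocc⟩ := Occ.exists_first_step hxy h
          exact ⟨v, by simpa using hadj, hopen, hocc⟩
    _ = ∑ v ∈ G.neighborFinset x,
          p * percProb G p (fun ω => Occ G (update ω s(x, v) false) v y) :=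
        Finset.sum_congr rfl fun v hv =>
          percProb_open_and (by simpa using hv) fun ω c => by rw [update_idem]
    _ ≤ ∑ v ∈ G.neighborFinset x, p * tau G p v y := by
        gcongr with v
        exact percProb_mono hp0 hp1 fun ω => Occ.of_update_false
    _ = p * ∑ v ∈ G.neighborFinset x, tau G p v y := (Finset.mul_sum _ _ _).symm
end
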